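/- arXiv:2405.18102 — 2 statements merged into one kernel-verified Lean document; each statement's English description precedes it below -/
import Mathlib

section
/- The weighted Adams method satisfies WEFX: in any assignment s it returns, for all parties p_x ≠ p_y and every seat t assigned to p_y, it holds that rep(p_x,s)/v_{p_x} ≥ (rep(p_y,s) − w_t)/v_{p_y}. -/
/-!
Let `T` be the last seat that goes to `p_y`. Everything `p_y` holds was assigned by round `T`, so
`rep(p_y) - w_t ≤ rep(p_y) - w_T = g_{p_y}(T)` since the weights decrease. Adams gave seat `T` to
`p_y`, so at that moment `g_{p_y}(T) / v_{p_y} ≤ g_{p_x}(T) / v_{p_x}`, and the weight of `p_x` can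
only grow after round `T`.
-/

open Finset

/-- Total weight of the seats assigned to party `p` under assignment `s`. -/
def rep {m k : ℕ} (w : Fin k → ℕ) (s : Fin k → Fin m) (p : Fin m) : ℕ :=
  ∑ t, if s t = p then w t else 0

/-- The quota of party `p`: total weight times its vote share. -/
def quota {m k : ℕ} (n : ℕ) (v : Fin m → ℕ) (w : Fin k → ℕ) (p : Fin m) : ℚ :=
  (∑ t, (w t : ℚ)) * (v p : ℚ) / (n : ℚ)

/-- Total weight assigned to party `p` in rounds before round `t`. -/
def gw {m k : ℕ} (w : Fin k → ℕ) (s : Fin k → Fin m) (t : Fin k) (p : Fin m) : ℕ :=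
  ∑ t' ∈ Finset.univ.filter (fun t' => t' < t), if s t' = p then w t' else 0

/-- A run of weighted Adams: seat t goes to a party maximising v_p / g_p(t),
where the ratio is ∞ whenever g_p(t) = 0. -/
def AdamsRun {m k : ℕ} (v : Fin m → ℕ) (w : Fin k → ℕ) (s : Fin k → Fin m) : Prop :=
  ∀ t : Fin k, ∀ p : Fin m,
    gw w s t (s t) = 0 ∨
      (gw w s t p ≠ 0 ∧
        (v p : ℚ) / (gw w s t p : ℚ) ≤ (v (s t) : ℚ) / (gw w s t (s t) : ℚ))

variable {m k : ℕ} {w : Fin k → ℕ} {s : Fin k → Fin m}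

lemma gw_le_rep (t : Fin k) (p : Fin m) : gw w s t p ≤ rep w s p :=
  sum_le_sum_of_subset (filter_subset _ _)

lemma exists_last_seat {t : Fin k} {p : Fin m} (ht : s t = p) :
    ∃ T, t ≤ T ∧ s T = p ∧ ∀ t', s t' = p → t' ≤ T := by
  set S := univ.filter (s · = p)
  have hmem : ∀ {t'}, s t' = p → t' ∈ S := fun h => mem_filter.2 ⟨mem_univ _, h⟩
  have hne : S.Nonempty := ⟨t, hmem ht⟩
  exact ⟨S.max' hne, S.le_max' t (hmem ht), (mem_filter.1 (S.max'_mem hne)).2,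
    fun t' ht' => S.le_max' t' (hmem ht')⟩

lemma rep_eq_gw_add_of_last {T : Fin k} {p : Fin m} (hT : s T = p)
    (hlast : ∀ t', s t' = p → t' ≤ T) : rep w s p = gw w s T p + w T := by
  have hzero : ∀ t' ∈ univ, t' ∉ univ.filter (· ≤ T) → (if s t' = p then w t' else 0) = 0 := by
    intro t' _ ht'
    have : ¬ t' ≤ T := by simpa using ht'
    exact if_neg (mt (hlast t') this)
  have hIic : univ.filter (· ≤ T) = insert T (univ.filter (· < T)) := by
    ext x
    simp [le_iff_eq_or_lt]
  rw [rep, gw, ← sum_subset (filter_subset _ _) hzero, hIic, sum_insert (by simp), if_pos hT,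
    add_comm]

lemma AdamsRun.gw_div_le_gw_div {v : Fin m → ℕ} (hs : AdamsRun v w s) (t : Fin k) {p : Fin m}
    (hp : 0 < v p) : (gw w s t (s t) : ℚ) / v (s t) ≤ gw w s t p / v p := by
  by_cases hgq : gw w s t (s t) = 0
  · rw [hgq, Nat.cast_zero, zero_div]
    positivity
  obtain ⟨hgp, hle⟩ := (hs t p).resolve_left hgq
  rcases Nat.eq_zero_or_pos (v (s t)) with hq | hq
  · rw [hq, Nat.cast_zero, div_zero]
    positivity
  rw [div_le_div_iff₀ (by exact_mod_cast Nat.pos_of_ne_zero hgp)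
    (by exact_mod_cast Nat.pos_of_ne_zero hgq)] at hle
  rw [div_le_div_iff₀ (by exact_mod_cast hq) (by exact_mod_cast hp)]
  linarith

theorem stmt9_general (k m : ℕ) (v : Fin m → ℕ) (w : Fin k → ℕ)
    (hv : ∀ p, 1 ≤ v p)
    (hmono : ∀ i j : Fin k, i ≤ j → w j ≤ w i)
    (s : Fin k → Fin m) (hs : AdamsRun v w s) :
    ∀ px py : Fin m, px ≠ py → ∀ t : Fin k, s t = py →
      ((rep w s py : ℚ) - (w t : ℚ)) / (v py : ℚ) ≤ (rep w s px : ℚ) / (v px : ℚ) := by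
  intro px py _ t hst
  obtain ⟨T, htT, hsT, hlast⟩ := exists_last_seat hst
  have hrep : (rep w s py : ℚ) = gw w s T py + w T := by
    exact_mod_cast rep_eq_gw_add_of_last hsT hlast
  have hwT : (w T : ℚ) ≤ w t := by exact_mod_cast hmono t T htT
  calc ((rep w s py : ℚ) - w t) / v py
      ≤ gw w s T py / v py := by gcongr; linarith
    _ ≤ gw w s T px / v px := hsT ▸ hs.gw_div_le_gw_div T (hv px)
    _ ≤ rep w s px / v px := by gcongr; exact_mod_cast gw_le_rep T px

/-- The weighted Adams method satisfies WEFX. -/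
theorem stmt9 (n k m : ℕ) (v : Fin m → ℕ) (w : Fin k → ℕ)
    (hv : ∀ p, 1 ≤ v p) (hn : ∑ p, v p = n)
    (hw : ∀ t, 1 ≤ w t) (hmono : ∀ i j : Fin k, i ≤ j → w j ≤ w i)
    (s : Fin k → Fin m) (hs : AdamsRun v w s) :
    ∀ px py : Fin m, px ≠ py → ∀ t : Fin k, s t = py →
      ((rep w s py : ℚ) - (w t : ℚ)) / (v py : ℚ) ≤ (rep w s px : ℚ) / (v px : ℚ) :=
  stmt9_general k m v w hv hmono s hs
end

section
/- WEF1 and WLQ-1 are incompatible: there is an election instance for which no seat assignment satisfies both weighted envy-freeness up to one seat (WEF1) and weighted lower quota up to one seat (WLQ-1). -/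
open Finset

/-- WEF1. -/
def WEF1 {m k : ℕ} (v : Fin m → ℕ) (w : Fin k → ℕ) (s : Fin k → Fin m) : Prop :=
  ∀ px py : Fin m, (∃ t, s t = py) →
    ∃ t : Fin k, s t = py ∧
      ((rep w s py : ℚ) - (w t : ℚ)) / (v py : ℚ) ≤ (rep w s px : ℚ) / (v px : ℚ)

/-- WLQ-1. -/
def WLQ1 {m k : ℕ} (n : ℕ) (v : Fin m → ℕ) (w : Fin k → ℕ) (s : Fin k → Fin m) : Prop :=
  ∀ p : Fin m, quota n v w p ≤ (rep w s p : ℚ) ∨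
    ∃ t : Fin k, s t ≠ p ∧ quota n v w p < (rep w s p : ℚ) + (w t : ℚ)

/-! With votes (1, 1, 4) and three unit seats the large party's quota is 2, so WLQ-1 forces it
to take two seats. One of the small parties is then seatless, and WEF1 towards the large party
would require the large party to hold at most one seat. -/

section General

variable {m k : ℕ} {v : Fin m → ℕ} {w : Fin k → ℕ} {s : Fin k → Fin m}

theorem sum_rep (w : Fin k → ℕ) (s : Fin k → Fin m) : ∑ p, rep w s p = ∑ t, w t := by
  simp only [rep]
  rw [Finset.sum_comm]
  simp

theorem exists_seat_of_rep_pos {p : Fin m} (h : 0 < rep w s p) : ∃ t, s t = p := by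
  by_contra! hp
  simp [rep, hp] at h

theorem WLQ1.quota_lt_rep_add {n c : ℕ} (h : WLQ1 n v w s) (hc : ∀ t, w t ≤ c) (hc0 : 0 < c)
    (p : Fin m) : quota n v w p < rep w s p + c := by
  rcases h p with hq | ⟨t, -, hq⟩
  · exact hq.trans_lt (by exact_mod_cast Nat.lt_add_of_pos_right hc0)
  · exact hq.trans_le (by exact_mod_cast Nat.add_le_add_left (hc t) _)

theorem WEF1.rep_le_of_rep_eq_zero (h : WEF1 v w s) {px py : Fin m} (hv : 0 < v py)
    (hpx : rep w s px = 0) (hpy : ∃ t, s t = py) : ∃ t, s t = py ∧ rep w s py ≤ w t := by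
  obtain ⟨t, hts, ht⟩ := h px py hpy
  refine ⟨t, hts, ?_⟩
  rw [hpx, Nat.cast_zero, zero_div, div_nonpos_iff] at ht
  have hv' : (0 : ℚ) < v py := by exact_mod_cast hv
  exact_mod_cast (show (rep w s py : ℚ) ≤ w t by
    rcases ht with ⟨-, hle⟩ | ⟨hle, -⟩ <;> linarith)

end General

theorem not_WEF1_and_WLQ1_votes_one_one_four (s : Fin 3 → Fin 3) :
    ¬ (WEF1 ![1, 1, 4] ![1, 1, 1] s ∧ WLQ1 6 ![1, 1, 4] ![1, 1, 1] s) := by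
  rintro ⟨hEF, hLQ⟩
  have hw : ∀ t, (![1, 1, 1] : Fin 3 → ℕ) t ≤ 1 := by decide
  have hbig : 2 ≤ rep ![1, 1, 1] s 2 := by
    have hq : quota 6 ![1, 1, 4] ![1, 1, 1] 2 = 2 := by
      simp [quota, Fin.sum_univ_three]
      norm_num
    have := hLQ.quota_lt_rep_add hw one_pos 2
    rw [hq] at this
    exact_mod_cast (show (1 : ℚ) < rep ![1, 1, 1] s 2 by push_cast at this; linarith)
  have htotal : rep ![1, 1, 1] s 0 + rep ![1, 1, 1] s 1 + rep ![1, 1, 1] s 2 = 3 := by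
    simpa [Fin.sum_univ_three] using sum_rep ![1, 1, 1] s
  have hseat : ∃ t, s t = 2 := exists_seat_of_rep_pos (w := ![1, 1, 1]) (by omega)
  obtain ⟨px, hpx⟩ : ∃ px, rep ![1, 1, 1] s px = 0 := by
    rcases Nat.eq_zero_or_pos (rep ![1, 1, 1] s 0) with h0 | h0
    · exact ⟨0, h0⟩
    · exact ⟨1, by omega⟩
  obtain ⟨t, -, ht⟩ := hEF.rep_le_of_rep_eq_zero (py := 2) (by decide) hpx hseat
  have := hw t
  omega

/-- WEF1 and WLQ-1 are incompatible: some election instance admits no seat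
assignment satisfying both. -/
theorem stmt10 :
    ∃ (m k n : ℕ) (v : Fin m → ℕ) (w : Fin k → ℕ),
      (∀ p, 1 ≤ v p) ∧ (∑ p, v p = n) ∧ (∀ t, 1 ≤ w t) ∧
      (∀ i j : Fin k, i ≤ j → w j ≤ w i) ∧
      ∀ s : Fin k → Fin m, ¬ (WEF1 v w s ∧ WLQ1 n v w s) :=
  ⟨3, 3, 6, ![1, 1, 4], ![1, 1, 1], by decide, by decide, by decide, by decide,
    not_WEF1_and_WLQ1_votes_one_one_four⟩
end
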